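/- arXiv:1605.07322 — 10 statements merged into one kernel-verified Lean document; each statement's English description precedes it below -/
import Mathlib

section
/- Let H = (U, V, E) be a bipartite graph and M ⊆ E a set of edges. If there exists a chain completion of M in H (a chain subgraph of H containing all edges of M), then there is no alternating cycle of M relative to H. -/
/-- Two edges (u1,v1), (u2,v2) are in conflict in the bipartite graph with
edge relation `E`: both are edges and both cross pairs are non-edges. -/
def Confl {U V : Type*} (E : U → V → Prop) (u1 : U) (v1 : V) (u2 : U) (v2 : V) : Prop :=
  E u1 v1 ∧ E u2 v2 ∧ ¬E u1 v2 ∧ ¬E u2 v1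

/-- A bipartite graph (given by its edge relation) has no induced 2K2. -/
def NoInduced2K2 {U V : Type*} (E : U → V → Prop) : Prop :=
  ¬ ∃ u1 u2 v1 v2, E u1 v1 ∧ E u2 v2 ∧ ¬E u1 v2 ∧ ¬E u2 v1

/-- An edge is committed if it is in conflict with another edge. -/
def Committed {U V : Type*} (E : U → V → Prop) (u : U) (v : V) : Prop :=
  ∃ u' v', Confl E u v u' v'

/-- An alternating cycle of `M` relative to the graph with edges `E`, of length `2k`. -/
def AltCycleK {U V : Type*} (E M : U → V → Prop) (k : ℕ) : Prop :=
  ∃ (u : ZMod k → U) (v : ZMod k → V), Function.Injective u ∧ Function.Injective v ∧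
    ∀ i : ZMod k, ¬E (u i) (v i) ∧ M (u (i + 1)) (v i)

/-- An alternating cycle of `M` relative to `E` (some length `2k`, `k ≥ 2`). -/
def AltCycle {U V : Type*} (E M : U → V → Prop) : Prop :=
  ∃ k : ℕ, 2 ≤ k ∧ AltCycleK E M k

/-- `(Er, Eb)` is a bipartition of the committed edges of `E`. -/
def Bipartition {U V : Type*} (E Er Eb : U → V → Prop) : Prop :=
  (∀ u v, Committed E u v ↔ (Er u v ∨ Eb u v)) ∧ ∀ u v, ¬(Er u v ∧ Eb u v)

/-- No configuration (A1): no two conflicting edges both in `Er`. -/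
def NoA1 {U V : Type*} (E Er : U → V → Prop) : Prop :=
  ¬ ∃ u1 u2 v1 v2, Er u1 v1 ∧ Er u2 v2 ∧ ¬E u1 v2 ∧ ¬E u2 v1

/-- No configuration (B1): no `u1v1, u2v2 ∈ Er`, `u2v1 ∈ Eb`, `u1v2 ∉ E`. -/
def NoB1 {U V : Type*} (E Er Eb : U → V → Prop) : Prop :=
  ¬ ∃ u1 u2 v1 v2, Er u1 v1 ∧ Er u2 v2 ∧ Eb u2 v1 ∧ ¬E u1 v2

/-- No configuration (C): no `u1v1, u2v2 ∈ Er`, `u1v2 ∉ E`, `u2v1 ∈ F`. -/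
def NoC {U V : Type*} (E F Er : U → V → Prop) : Prop :=
  ¬ ∃ u1 u2 v1 v2, Er u1 v1 ∧ Er u2 v2 ∧ ¬E u1 v2 ∧ F u2 v1

/-- `(Er, Eb)` is (A, C)-free. -/
def ACFree {U V : Type*} (E F Er Eb : U → V → Prop) : Prop :=
  NoA1 E Er ∧ NoA1 E Eb ∧ NoC E F Er

/-- `(Er, Eb)` is (A, B, C)-free. -/
def ABCFree {U V : Type*} (E F Er Eb : U → V → Prop) : Prop :=
  ACFree E F Er Eb ∧ NoB1 E Er Eb ∧ NoB1 E Eb Er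

/-- `(E1, E2)` is a 2-chain subgraph cover of the bipartite graph with edge set `E`. -/
def ChainCover {U V : Type*} (E E1 E2 : U → V → Prop) : Prop :=
  (∀ u v, E1 u v → E u v) ∧ (∀ u v, E2 u v → E u v) ∧
  (∀ u v, E u v ↔ E1 u v ∨ E2 u v) ∧ NoInduced2K2 E1 ∧ NoInduced2K2 E2

/-! A chain completion `E'` of `M` would contain the alternating cycle's `M`-edges
`u (i + 1) v i` and miss its non-edges `u i v i`. In a 2K2-free graph, `u (j + 1) v 0 ∈ E'`,
`u (j + 2) v (j + 1) ∈ E'` and `u (j + 1) v (j + 1) ∉ E'` force `u (j + 2) v 0 ∈ E'`, so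
walking once around the cycle yields `u 0 v 0 ∈ E' ⊆ E`, a contradiction. -/

theorem NoInduced2K2.adj_of_adj_of_not_adj {U V : Type*} {E : U → V → Prop}
    (hE : NoInduced2K2 E) {a c : U} {b d : V} (hab : E a b) (hcd : E c d) (had : ¬E a d) :
    E c b :=
  by_contra fun hcb => hE ⟨a, c, b, d, hab, hcd, had, hcb⟩

theorem NoInduced2K2.adj_zero_of_alternating {U V : Type*} {E : U → V → Prop}
    (hE : NoInduced2K2 E) {u : ℕ → U} {v : ℕ → V} (hnon : ∀ i, ¬E (u i) (v i))
    (hadj : ∀ i, E (u (i + 1)) (v i)) : ∀ j, E (u (j + 1)) (v 0)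
  | 0 => hadj 0
  | j + 1 => hE.adj_of_adj_of_not_adj (adj_zero_of_alternating hE hnon hadj j)
      (hadj (j + 1)) (hnon (j + 1))

theorem AltCycleK.mono {U V : Type*} {E E' M M' : U → V → Prop} {k : ℕ}
    (hc : AltCycleK E M k) (hM : ∀ u v, M u v → M' u v) (hE : ∀ u v, E' u v → E u v) :
    AltCycleK E' M' k := by
  obtain ⟨u, v, hu, hv, hcyc⟩ := hc
  exact ⟨u, v, hu, hv, fun i => ⟨fun h => (hcyc i).1 (hE _ _ h), hM _ _ (hcyc i).2⟩⟩

theorem NoInduced2K2.not_altCycleK_self {U V : Type*} {E : U → V → Prop}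
    (hE : NoInduced2K2 E) {k : ℕ} (hk : 0 < k) : ¬AltCycleK E E k := by
  rintro ⟨u, v, -, -, hcyc⟩
  have hpath := hE.adj_zero_of_alternating (u := fun n : ℕ => u n) (v := fun n : ℕ => v n)
    (fun i => (hcyc i).1) (fun i => by simpa only [Nat.cast_succ] using (hcyc i).2) (k - 1)
  have hwrap : ((k - 1 + 1 : ℕ) : ZMod k) = 0 := by
    rw [Nat.sub_add_cancel hk, ZMod.natCast_self]
  simp only [hwrap, Nat.cast_zero] at hpath
  exact (hcyc 0).1 hpath

theorem stmt2_general {U V : Type*} (E M : U → V → Prop)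
    (h : ∃ E' : U → V → Prop, (∀ u v, M u v → E' u v) ∧ (∀ u v, E' u v → E u v) ∧
      NoInduced2K2 E') :
    ¬ AltCycle E M := by
  rintro ⟨k, hk, hcyc⟩
  obtain ⟨E', hME', hE'E, hchain⟩ := h
  exact hchain.not_altCycleK_self (by omega) (hcyc.mono hME' hE'E)

/-- If `M` has a chain completion in `H`, then there is no alternating cycle
of `M` relative to `H`. -/
theorem stmt2 {U V : Type*} (E M : U → V → Prop) (hME : ∀ u v, M u v → E u v)
    (h : ∃ E' : U → V → Prop, (∀ u v, M u v → E' u v) ∧ (∀ u v, E' u v → E u v) ∧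
      NoInduced2K2 E') :
    ¬ AltCycle E M :=
  stmt2_general E M h
end

section
/- Let H = (U, V, E) be a finite bipartite graph and M ⊆ E a set of edges. If there is no alternating cycle of M relative to H, then M has a chain completion in H, i.e., there exists an edge set E' with M ⊆ E' ⊆ E such that (U, V, E') has no induced 2K2. -/
open Relation

/-! Orient `u → u'` whenever some `v` has `uv ∉ E` and `u'v ∈ M`. A shortest closed walk of
this relation is an alternating cycle, so the relation is acyclic and (Szpilrajn) extends to a
linear order `≤` on `U`. Then `E' uv :↔ ∃ u' ≤ u, u'v ∈ M` stays inside `E`, and its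
neighbourhoods `N(v)` are up-sets of a linear order, hence nested: `E'` is a chain graph. -/

section AlternatingWalks

variable {U V : Type*} (E M : U → V → Prop)

def AltStep (a b : U) : Prop :=
  ∃ v, ¬E a v ∧ M b v

def IsAltClosedWalk {k : ℕ} (u : ZMod k → U) (v : ZMod k → V) : Prop :=
  ∀ i : ZMod k, ¬E (u i) (v i) ∧ M (u (i + 1)) (v i)

variable {E M}

theorem exists_altPath_of_transGen {a b : U} (h : TransGen (AltStep E M) a b) :
    ∃ (d : ℕ) (c : ℕ → U) (w : ℕ → V), 0 < d ∧ c 0 = a ∧ c d = b ∧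
      ∀ t < d, ¬E (c t) (w t) ∧ M (c (t + 1)) (w t) := by
  induction h using TransGen.head_induction_on with
  | @single a hab =>
    obtain ⟨v, hav, hbv⟩ := hab
    refine ⟨1, fun | 0 => a | _ => b, fun _ => v, one_pos, rfl, rfl, fun t ht => ?_⟩
    obtain rfl : t = 0 := by omega
    exact ⟨hav, hbv⟩
  | @head a a' hstep _ ih =>
    obtain ⟨v, hav, ha'v⟩ := hstep
    obtain ⟨d, c, w, hd, hc0, hcd, hw⟩ := ih
    refine ⟨d + 1, fun | 0 => a | t + 1 => c t, fun | 0 => v | t + 1 => w t,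
      d.succ_pos, rfl, hcd, fun t ht => ?_⟩
    rcases t with _ | t
    · exact ⟨hav, show M (c 0) v from hc0 ▸ ha'v⟩
    · exact hw t (by omega)

theorem exists_isAltClosedWalk_of_nat {d : ℕ} (hd : 0 < d) (c : ℕ → U) (w : ℕ → V)
    (hw : ∀ t < d, ¬E (c t) (w t) ∧ M (c ((t + 1) % d)) (w t)) :
    ∃ (u : ZMod d → U) (v : ZMod d → V), IsAltClosedWalk E M u v := by
  have : NeZero d := ⟨hd.ne'⟩
  refine ⟨fun i => c i.val, fun i => w i.val, fun i => ?_⟩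
  have hval : (i + 1).val = (i.val + 1) % d := by
    rw [ZMod.val_add, ZMod.val_one_eq_one_mod, Nat.add_mod_mod]
  simpa only [hval] using hw i.val (ZMod.val_lt i)

theorem exists_isAltClosedWalk_of_transGen {a : U} (h : TransGen (AltStep E M) a a) :
    ∃ n, 0 < n ∧ ∃ (u : ZMod n → U) (v : ZMod n → V), IsAltClosedWalk E M u v := by
  obtain ⟨d, c, w, hd, hc0, hcd, hw⟩ := exists_altPath_of_transGen h
  refine ⟨d, hd, exists_isAltClosedWalk_of_nat hd c w fun t ht => ⟨(hw t ht).1, ?_⟩⟩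
  rcases Nat.lt_or_ge (t + 1) d with hlt | hge
  · rw [Nat.mod_eq_of_lt hlt]
    exact (hw t ht).2
  · obtain rfl : d = t + 1 := by omega
    rw [Nat.mod_self, hc0, ← hcd]
    exact (hw t ht).2

/-- Closing the stretch `a, a + 1, …, b` of a closed walk by an `M`-edge `u a – v b`. -/
theorem IsAltClosedWalk.shortcut {n : ℕ} [NeZero n] {u : ZMod n → U} {v : ZMod n → V}
    (hw : IsAltClosedWalk E M u v) {a b : ZMod n} (hab : M (u a) (v b)) :
    ∃ (u' : ZMod ((b - a).val + 1) → U) (v' : ZMod ((b - a).val + 1) → V),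
      IsAltClosedWalk E M u' v' := by
  refine exists_isAltClosedWalk_of_nat (Nat.succ_pos _) (fun t => u (a + t)) (fun t => v (a + t))
    fun t ht => ⟨(hw _).1, ?_⟩
  rcases Nat.lt_or_ge (t + 1) ((b - a).val + 1) with hlt | hge
  · rw [Nat.mod_eq_of_lt hlt]
    simpa only [Nat.cast_succ, add_assoc] using (hw (a + t)).2
  · obtain rfl : t = (b - a).val := by omega
    simpa only [Nat.mod_self, Nat.cast_zero, add_zero, ZMod.natCast_zmod_val,
      add_sub_cancel] using hab

theorem ZMod.val_add_one_lt {n : ℕ} [NeZero n] {x : ZMod n} (hx : x + 1 ≠ 0) :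
    x.val + 1 < n := by
  refine lt_of_le_of_ne (ZMod.val_lt x) fun hn => hx ?_
  rw [← ZMod.natCast_zmod_val x, ← Nat.cast_add_one, hn, ZMod.natCast_self]

theorem IsAltClosedWalk.injective_of_minimal {n : ℕ} [NeZero n] {u : ZMod n → U}
    {v : ZMod n → V} (hw : IsAltClosedWalk E M u v)
    (hmin : ∀ m, 0 < m → m < n → ¬∃ (u' : ZMod m → U) (v' : ZMod m → V),
      IsAltClosedWalk E M u' v') :
    Function.Injective u ∧ Function.Injective v := by
  have shorter : ∀ a b : ZMod n, b - a + 1 ≠ 0 → ¬M (u a) (v b) := fun a b hab hM =>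
    hmin _ (Nat.succ_pos _) (ZMod.val_add_one_lt hab) (hw.shortcut hM)
  constructor
  · intro i j hij
    by_contra hne
    refine shorter i (j - 1) ?_ (hij ▸ by simpa only [sub_add_cancel] using (hw (j - 1)).2)
    rw [sub_sub, add_comm 1 i, ← sub_sub, sub_add_cancel]
    exact sub_ne_zero.mpr (Ne.symm hne)
  · intro i j hij
    by_contra hne
    refine shorter (j + 1) i ?_ (hij ▸ (hw j).2)
    rw [← sub_sub, sub_add_cancel]
    exact sub_ne_zero.mpr hne

theorem not_isAltClosedWalk_one (hME : ∀ u v, M u v → E u v) (u : ZMod 1 → U)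
    (v : ZMod 1 → V) : ¬IsAltClosedWalk E M u v := fun hw => by
  obtain ⟨hnE, hM⟩ := hw 0
  rw [Subsingleton.elim (0 + 1 : ZMod 1) 0] at hM
  exact hnE (hME _ _ hM)

theorem exists_altCycle_of_isAltClosedWalk (hME : ∀ u v, M u v → E u v) {n : ℕ} (hn : 0 < n)
    {u : ZMod n → U} {v : ZMod n → V} (hw : IsAltClosedWalk E M u v) : AltCycle E M := by
  classical
  have hex : ∃ m, 0 < m ∧ ∃ (u : ZMod m → U) (v : ZMod m → V), IsAltClosedWalk E M u v :=
    ⟨n, hn, u, v, hw⟩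
  obtain ⟨hm, u', v', hw'⟩ := Nat.find_spec hex
  have : NeZero (Nat.find hex) := ⟨hm.ne'⟩
  have hm2 : 2 ≤ Nat.find hex := (Nat.le_find_iff hex 2).2 fun m hm ⟨hm0, u, v, hw⟩ => by
    obtain rfl : m = 1 := by omega
    exact not_isAltClosedWalk_one hME u v hw
  obtain ⟨hu, hv⟩ :=
    hw'.injective_of_minimal fun m hm0 hmn hwm => Nat.find_min hex hmn ⟨hm0, hwm⟩
  exact ⟨_, hm2, u', v', hu, hv, hw'⟩

theorem not_transGen_altStep_self (hME : ∀ u v, M u v → E u v) (h : ¬AltCycle E M) (a : U) :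
    ¬TransGen (AltStep E M) a a := fun ha => by
  obtain ⟨n, hn, u, v, hw⟩ := exists_isAltClosedWalk_of_transGen ha
  exact h (exists_altCycle_of_isAltClosedWalk hME hn hw)

end AlternatingWalks

theorem Relation.ReflTransGen.antisymm_of_not_transGen_self {α : Type*} {r : α → α → Prop}
    (hr : ∀ a, ¬TransGen r a a) {a b : α} (hab : ReflTransGen r a b)
    (hba : ReflTransGen r b a) : a = b := by
  rcases reflTransGen_iff_eq_or_transGen.1 hab with rfl | hab
  · rfl
  · exact absurd (hab.trans_left hba) (hr a)

theorem noInduced2K2_of_upClosed {U V : Type*} {s : U → U → Prop} [Std.Total s]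
    {F : U → V → Prop} (hF : ∀ u u' v, s u u' → F u v → F u' v) : NoInduced2K2 F := by
  rintro ⟨u₁, u₂, v₁, v₂, h₁₁, h₂₂, h₁₂, h₂₁⟩
  rcases total_of s u₁ u₂ with h | h
  · exact h₂₁ (hF _ _ _ h h₁₁)
  · exact h₁₂ (hF _ _ _ h h₂₂)

theorem stmt3_general {U V : Type*} (E M : U → V → Prop)
    (hME : ∀ u v, M u v → E u v) (h : ¬ AltCycle E M) :
    ∃ E' : U → V → Prop, (∀ u v, M u v → E' u v) ∧ (∀ u v, E' u v → E u v) ∧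
      NoInduced2K2 E' := by
  have : IsPartialOrder U (ReflTransGen (AltStep E M)) :=
    { antisymm _ _ :=
        ReflTransGen.antisymm_of_not_transGen_self (not_transGen_altStep_self hME h) }
  obtain ⟨s, hs, hRs⟩ := extend_partialOrder (ReflTransGen (AltStep E M))
  refine ⟨fun u v => ∃ u', s u' u ∧ M u' v, fun u v hM => ⟨u, refl_of s u, hM⟩, ?_,
    noInduced2K2_of_upClosed fun u u' v huu' ⟨w, hwu, hM⟩ => ⟨w, trans_of s hwu huu', hM⟩⟩
  rintro u v ⟨u', hu'u, hM⟩
  by_contra hnE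
  obtain rfl : u' = u := antisymm_of s hu'u (hRs _ _ (.single ⟨v, hnE, hM⟩))
  exact hnE (hME _ _ hM)

/-- If there is no alternating cycle of `M` relative to the finite bipartite
graph `H`, then `M` has a chain completion in `H`. -/
theorem stmt3 {U V : Type*} [Fintype U] [Fintype V] (E M : U → V → Prop)
    (hME : ∀ u v, M u v → E u v) (h : ¬ AltCycle E M) :
    ∃ E' : U → V → Prop, (∀ u v, M u v → E' u v) ∧ (∀ u v, E' u v → E u v) ∧
      NoInduced2K2 E' :=
  stmt3_general E M hME h
end

section
/- Let H = (U, V, E) be a finite bipartite graph and M ⊆ E. If every vertex of H is incident to at least one edge of M and also incident to at least one non-edge (a pair with the other side not in E), then there exists an alternating cycle of M relative to H. -/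
/-!
Choose for every `u` a non-neighbour `f u` and for every `v` an `M`-partner `g v`. On the finite
set `U` the map `g ∘ f` has a periodic orbit, which is not a fixed point because `M ⊆ E`; walking
once around it alternates the non-edges `u, f u` with the `M`-edges `g (f u), f u`, and injectivity
of `u` passes to `f ∘ u` since `g ∘ f ∘ u` is `u` shifted by one.
-/

namespace Function

variable {α : Type*} {f : α → α} {x : α}

theorem periodicPts_nonempty [Finite α] [Nonempty α] (f : α → α) : (periodicPts f).Nonempty := by
  obtain ⟨a, b, hne, heq⟩ :=
    Finite.exists_ne_map_eq_of_infinite (f^[·] (Classical.arbitrary α))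
  wlog hab : a < b generalizing a b
  · exact this b a hne.symm heq.symm (by omega)
  refine ⟨f^[a] (Classical.arbitrary α), mk_mem_periodicPts (Nat.sub_pos_of_lt hab) ?_⟩
  rw [IsPeriodicPt, IsFixedPt, ← iterate_add_apply, Nat.sub_add_cancel hab.le]
  exact heq.symm

theorem exists_injective_zmod_minimalPeriod_orbit (hx : x ∈ periodicPts f) :
    ∃ u : ZMod (minimalPeriod f x) → α, Injective u ∧ ∀ i, u (i + 1) = f (u i) := by
  have : NeZero (minimalPeriod f x) := ⟨(minimalPeriod_pos_of_mem_periodicPts hx).ne'⟩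
  refine ⟨fun i => f^[i.val] x, fun i j hij => ZMod.val_injective _ ?_, fun i => ?_⟩
  · exact iterate_injOn_Iio_minimalPeriod (ZMod.val_lt i) (ZMod.val_lt j) hij
  · change f^[(i + 1).val] x = f (f^[i.val] x)
    rw [ZMod.val_add, ZMod.val_one_eq_one_mod, Nat.add_mod_mod, iterate_mod_minimalPeriod_eq,
      iterate_succ_apply']

end Function

theorem altCycleK_of_orbit {U V : Type*} {E M : U → V → Prop} {k : ℕ} {f : U → V} {g : V → U}
    (hf : ∀ u, ¬E u (f u)) (hg : ∀ v, M (g v) v) (u : ZMod k → U) (hu : u.Injective)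
    (hsucc : ∀ i, u (i + 1) = g (f (u i))) : AltCycleK E M k := by
  refine ⟨u, f ∘ u, hu, fun i j hij => ?_, fun i => ⟨hf (u i), hsucc i ▸ hg _⟩⟩
  have : u (i + 1) = u (j + 1) := by rw [hsucc, hsucc]; exact congrArg g hij
  exact add_right_cancel (hu this)

theorem stmt4_general {U V : Type*} [Fintype U] [Nonempty U]
    (E M : U → V → Prop) (hME : ∀ u v, M u v → E u v)
    (hMV : ∀ v : V, ∃ u, M u v)
    (hEU : ∀ u : U, ∃ v, ¬E u v) :
    AltCycle E M := by
  choose f hf using hEU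
  choose g hg using hMV
  obtain ⟨x, hx⟩ := Function.periodicPts_nonempty (g ∘ f)
  obtain ⟨u, hu, hsucc⟩ := Function.exists_injective_zmod_minimalPeriod_orbit hx
  have hpos := Function.minimalPeriod_pos_of_mem_periodicPts hx
  have hne_one : Function.minimalPeriod (g ∘ f) x ≠ 1 := fun h1 => by
    have hfix : g (f x) = x := Function.minimalPeriod_eq_one_iff_isFixedPt.mp h1
    have hM := hg (f x)
    rw [hfix] at hM
    exact hf x (hME _ _ hM)
  exact ⟨_, by omega, altCycleK_of_orbit hf hg u hu hsucc⟩

/-- If every vertex of a finite bipartite graph is incident to an edge of `M`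
and to a non-edge, then there is an alternating cycle of `M` relative to `H`. -/
theorem stmt4 {U V : Type*} [Fintype U] [Fintype V] [Nonempty U] [Nonempty V]
    (E M : U → V → Prop) (hME : ∀ u v, M u v → E u v)
    (hMU : ∀ u : U, ∃ v, M u v) (hMV : ∀ v : V, ∃ u, M u v)
    (hEU : ∀ u : U, ∃ v, ¬E u v) (hEV : ∀ v : V, ∃ u, ¬E u v) :
    AltCycle E M :=
  stmt4_general E M hME hMV hEU
end

section
/- Let G = (U, V, E) be a bipartite graph with a 2-chain subgraph cover (G_1, G_2), and color committed edges red (E_r) if in G_1 and blue (E_b) otherwise. Then there is no configuration (B_1): there do not exist u_1, u_2 ∈ U and v_1, v_2 ∈ V with u_1v_1, u_2v_2 ∈ E_r, u_2v_1 ∈ E_b, and u_1v_2 ∉ E. -/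
theorem NoInduced2K2.noB1 {U V : Type*} {E E1 Er Eb : U → V → Prop}
    (hE1 : NoInduced2K2 E1) (hsub : ∀ u v, E1 u v → E u v)
    (hr : ∀ u v, Er u v → E1 u v) (hb : ∀ u v, Eb u v → ¬E1 u v) :
    NoB1 E Er Eb := by
  rintro ⟨u1, u2, v1, v2, h11, h22, h21, h12⟩
  exact hE1 ⟨u1, u2, v1, v2, hr _ _ h11, hr _ _ h22, fun h => h12 (hsub _ _ h), hb _ _ h21⟩

/-- The red/blue coloring coming from a 2-chain subgraph cover contains no
configuration (B1). -/
theorem stmt7 {U V : Type*} (E E1 E2 : U → V → Prop) (hcover : ChainCover E E1 E2) :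
    NoB1 E (fun u v => Committed E u v ∧ E1 u v)
          (fun u v => Committed E u v ∧ E2 u v ∧ ¬E1 u v) := by
  obtain ⟨hsub, -, -, hE1, -⟩ := hcover
  exact hE1.noB1 hsub (fun _ _ h => h.2) (fun _ _ h => h.2.2)
end

section
/- Let G = (U, V, E) be a bipartite graph, F ⊆ E, E_c the committed edges, E_u the uncommitted edges, and (E_r, E_b) an (A, B, C)-free bipartition of E_c with F ∩ E_c ⊆ E_b. Then the subgraph of G induced by the edge set E_b ∪ E_u is a chain graph (has no induced 2K2 using only edges of E_b ∪ E_u and non-edges of G). -/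
/-!
If both cross pairs of a 2K2 in `E_b ∪ E_u` are non-edges, its two edges conflict, so both are
committed, hence blue, which is (A₂). Otherwise a cross pair `ad` is an edge, necessarily red.
It conflicts with some edge `xy`, blue by (A₁), and (A₂) forces `xc ∈ E`. If the opposite cross
pair `bc` is a non-edge, `xc` conflicts with `bd`, so `bd` is blue and `xc` red; then (A₂) gives
`by ∈ E`, so `ac` conflicts with `by` and is blue: `xc, ad, ac` form a (B₁) configuration.
If both cross pairs are red, their witnesses `x, z` give conflicting edges `xv₁, zv₂`, one of
which is blue and can play the role of `bd` in the previous case.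
-/

section

variable {U V : Type*} {E M Er Eb : U → V → Prop} {a b : U} {c d : V}

theorem Confl.symm (h : Confl E a c b d) : Confl E b d a c :=
  ⟨h.2.1, h.1, h.2.2.2, h.2.2.1⟩

theorem Confl.committed (h : Confl E a c b d) : Committed E a c :=
  ⟨b, d, h⟩

theorem Committed.edge : Committed E a c → E a c :=
  fun ⟨_, _, h⟩ => h.1

theorem NoA1.not_confl (h : NoA1 E M) (hac : M a c) (hbd : M b d) : ¬Confl E a c b d :=
  fun hc => h ⟨a, b, c, d, hac, hbd, hc.2.2.1, hc.2.2.2⟩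

namespace Bipartition

theorem committed_of_red (hp : Bipartition E Er Eb) (h : Er a c) : Committed E a c :=
  (hp.1 a c).2 (Or.inl h)

theorem committed_of_blue (hp : Bipartition E Er Eb) (h : Eb a c) : Committed E a c :=
  (hp.1 a c).2 (Or.inr h)

theorem red_or_blue (hp : Bipartition E Er Eb) (h : Committed E a c) : Er a c ∨ Eb a c :=
  (hp.1 a c).1 h

theorem blue_of_confl_red (hp : Bipartition E Er Eb) (hA1 : NoA1 E Er) (hr : Er a c)
    (hc : Confl E a c b d) : Eb b d :=
  (hp.red_or_blue hc.symm.committed).resolve_left fun hr' => hA1.not_confl hr hr' hc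

theorem red_of_confl_blue (hp : Bipartition E Er Eb) (hA2 : NoA1 E Eb) (hb : Eb a c)
    (hc : Confl E a c b d) : Er b d :=
  (hp.red_or_blue hc.symm.committed).resolve_right fun hb' => hA2.not_confl hb hb' hc

end Bipartition

def BlueOrUncommitted (E Eb : U → V → Prop) (u : U) (v : V) : Prop :=
  Eb u v ∨ (E u v ∧ ¬Committed E u v)

namespace BlueOrUncommitted

theorem edge (hp : Bipartition E Er Eb) : BlueOrUncommitted E Eb a c → E a c
  | .inl hb => (hp.committed_of_blue hb).edge
  | .inr h => h.1

theorem blue_of_confl (h : BlueOrUncommitted E Eb a c) (hc : Confl E a c b d) : Eb a c :=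
  h.resolve_right fun h' => h'.2 hc.committed

end BlueOrUncommitted

theorem Bipartition.red_of_not_blueOrUncommitted (hp : Bipartition E Er Eb) (he : E a c)
    (h : ¬BlueOrUncommitted E Eb a c) : Er a c := by
  have hc : Committed E a c := by_contra fun hc => h (.inr ⟨he, hc⟩)
  exact (hp.red_or_blue hc).resolve_right fun hb => h (.inl hb)

theorem exists_blue_confl_of_red (hp : Bipartition E Er Eb) (hA1 : NoA1 E Er) (hA2 : NoA1 E Eb)
    (hr : Er a d) (hac : BlueOrUncommitted E Eb a c) :
    ∃ x y, Eb x y ∧ Confl E a d x y ∧ E x c := by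
  obtain ⟨x, y, hc⟩ := hp.committed_of_red hr
  have hxy := hp.blue_of_confl_red hA1 hr hc
  refine ⟨x, y, hxy, hc, by_contra fun hxc => ?_⟩
  have hc' : Confl E a c x y := ⟨hac.edge hp, hc.2.1, hc.2.2.1, hxc⟩
  exact hA2.not_confl (hac.blue_of_confl hc') hxy hc'

theorem false_of_red_of_not_edge (hp : Bipartition E Er Eb) (hA1 : NoA1 E Er) (hA2 : NoA1 E Eb)
    (hB1 : NoB1 E Er Eb) (hr : Er a d) (hac : BlueOrUncommitted E Eb a c)
    (hbd : BlueOrUncommitted E Eb b d) (hbc : ¬E b c) : False := by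
  obtain ⟨x, y, hxy, hc, hxc⟩ := exists_blue_confl_of_red hp hA1 hA2 hr hac
  have hxc_bd : Confl E x c b d := ⟨hxc, hbd.edge hp, hc.2.2.2, hbc⟩
  have hbd_blue := hbd.blue_of_confl hxc_bd.symm
  have hxc_red := hp.red_of_confl_blue hA2 hbd_blue hxc_bd.symm
  have hby : E b y := by_contra fun hby =>
    hA2.not_confl hbd_blue hxy ⟨hbd.edge hp, hc.2.1, hby, hc.2.2.2⟩
  have hac_blue := hac.blue_of_confl (⟨hac.edge hp, hby, hc.2.2.1, hbc⟩ : Confl E a c b y)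
  exact hB1 ⟨x, a, c, d, hxc_red, hr, hac_blue, hc.2.2.2⟩

theorem false_of_red_of_red (hp : Bipartition E Er Eb) (hA1 : NoA1 E Er) (hA2 : NoA1 E Eb)
    (hB1 : NoB1 E Er Eb) {u₁ u₂ : U} {v₁ v₂ : V} (h₁₂ : Er u₁ v₂) (h₂₁ : Er u₂ v₁)
    (h₁ : BlueOrUncommitted E Eb u₁ v₁) (h₂ : BlueOrUncommitted E Eb u₂ v₂) : False := by
  obtain ⟨x, _, -, hx, hxv₁⟩ := exists_blue_confl_of_red hp hA1 hA2 h₁₂ h₁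
  obtain ⟨z, _, -, hz, hzv₂⟩ := exists_blue_confl_of_red hp hA1 hA2 h₂₁ h₂
  have hc : Confl E x v₁ z v₂ := ⟨hxv₁, hzv₂, hx.2.2.2, hz.2.2.2⟩
  rcases hp.red_or_blue hc.committed with hred | hblue
  · exact false_of_red_of_not_edge hp hA1 hA2 hB1 h₁₂ h₁
      (.inl (hp.blue_of_confl_red hA1 hred hc)) hz.2.2.2
  · exact false_of_red_of_not_edge hp hA1 hA2 hB1 h₂₁ h₂ (.inl hblue) hx.2.2.2

end

theorem stmt9_general {U V : Type*} (E F Er Eb : U → V → Prop)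
    (hpart : Bipartition E Er Eb) (habc : ABCFree E F Er Eb) :
    NoInduced2K2 (fun u v => Eb u v ∨ (E u v ∧ ¬Committed E u v)) := by
  obtain ⟨⟨hA1, hA2, -⟩, hB1, -⟩ := habc
  change NoInduced2K2 (BlueOrUncommitted E Eb)
  have red : ∀ {u v}, E u v → ¬BlueOrUncommitted E Eb u v → Er u v :=
    hpart.red_of_not_blueOrUncommitted
  rintro ⟨u₁, u₂, v₁, v₂, h₁, h₂, h₁₂, h₂₁⟩
  by_cases e₁₂ : E u₁ v₂ <;> by_cases e₂₁ : E u₂ v₁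
  · exact false_of_red_of_red hpart hA1 hA2 hB1 (red e₁₂ h₁₂) (red e₂₁ h₂₁) h₁ h₂
  · exact false_of_red_of_not_edge hpart hA1 hA2 hB1 (red e₁₂ h₁₂) h₁ h₂ e₂₁
  · exact false_of_red_of_not_edge hpart hA1 hA2 hB1 (red e₂₁ h₂₁) h₂ h₁ e₁₂
  · have hc : Confl E u₁ v₁ u₂ v₂ := ⟨h₁.edge hpart, h₂.edge hpart, e₁₂, e₂₁⟩
    exact hA2.not_confl (h₁.blue_of_confl hc) (h₂.blue_of_confl hc.symm) hc

/-- Given an (A, B, C)-free bipartition of the committed edges, the subgraph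
induced by the blue and uncommitted edges is a chain graph. -/
theorem stmt9 {U V : Type*} (E F Er Eb : U → V → Prop) (hFE : ∀ u v, F u v → E u v)
    (hpart : Bipartition E Er Eb) (habc : ABCFree E F Er Eb)
    (hFb : ∀ u v, F u v → Committed E u v → Eb u v) :
    NoInduced2K2 (fun u v => Eb u v ∨ (E u v ∧ ¬Committed E u v)) :=
  stmt9_general E F Er Eb hpart habc
end

section
/- Let G = (U, V, E) be a bipartite graph, F ⊆ E, and (E_r, E_b) an (A, B, C)-free bipartition of the committed edges E_c with F ∩ E_c ⊆ E_b. Then no two edges of E_r are in conflict in G − F; that is, there are no u_1, u_2 ∈ U, v_1, v_2 ∈ V with u_1v_1, u_2v_2 ∈ E_r and u_1v_2, u_2v_1 ∈ (E \ E) ∪ F (i.e., each of u_1v_2 and u_2v_1 is either a non-edge of G or an edge of F). -/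
section RedBlue

variable {U V : Type*} {E F Er Eb : U → V → Prop}

theorem Confl.symm_s10 {u1 u2 : U} {v1 v2 : V} (h : Confl E u1 v1 u2 v2) : Confl E u2 v2 u1 v1 :=
  ⟨h.2.1, h.1, h.2.2.2, h.2.2.1⟩

theorem Confl.committed_s10 {u1 u2 : U} {v1 v2 : V} (h : Confl E u1 v1 u2 v2) : Committed E u1 v1 :=
  ⟨u2, v2, h⟩

theorem Bipartition.blue_of_not_red (hpart : Bipartition E Er Eb) {u : U} {v : V}
    (hc : Committed E u v) (hr : ¬Er u v) : Eb u v :=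
  ((hpart.1 u v).1 hc).resolve_left hr

theorem NoA1.not_confl_s10 (hA : NoA1 E Er) {u1 u2 : U} {v1 v2 : V} (h1 : Er u1 v1) (h2 : Er u2 v2)
    (hconf : Confl E u1 v1 u2 v2) : False :=
  hA ⟨u1, u2, v1, v2, h1, h2, hconf.2.2.1, hconf.2.2.2⟩

theorem blue_of_confl_red (hpart : Bipartition E Er Eb) (hA1r : NoA1 E Er) {u u' : U} {v v' : V}
    (hr : Er u v) (hconf : Confl E u v u' v') : Eb u' v' :=
  hpart.blue_of_not_red hconf.symm_s10.committed_s10 fun hr' => hA1r.not_confl_s10 hr hr' hconf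

/-- Otherwise `u1v2` would be committed, hence blue, and in conflict with the blue edge `u'v'`. -/
theorem adj_of_confl_red_of_F (hFE : ∀ u v, F u v → E u v) (hpart : Bipartition E Er Eb)
    (hA1r : NoA1 E Er) (hA1b : NoA1 E Eb) (hFb : ∀ u v, F u v → Committed E u v → Eb u v)
    {u1 u' : U} {v1 v2 v' : V} (hr : Er u1 v1) (hconf : Confl E u1 v1 u' v') (hf : F u1 v2) :
    E u' v2 := by
  by_contra hn
  have hconf' : Confl E u1 v2 u' v' := ⟨hFE _ _ hf, hconf.2.1, hconf.2.2.1, hn⟩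
  exact hA1b.not_confl_s10 (hFb _ _ hf hconf'.committed_s10) (blue_of_confl_red hpart hA1r hr hconf) hconf'

theorem blue_of_committed_of_F (hpart : Bipartition E Er Eb) (hC : NoC E F Er) {u1 u' : U}
    {v1 v2 : V} (hc : Committed E u' v2) (hr : Er u1 v1) (hn : ¬E u' v1) (hf : F u1 v2) :
    Eb u' v2 :=
  hpart.blue_of_not_red hc fun hr' => hC ⟨u', u1, v2, v1, hr', hr, hn, hf⟩

/-- With partners `u'v'` of `u1v1` and `u''v''` of `u2v2`, both `u'v2` and `u''v1` are edges,
they conflict with each other, and neither can be red by (C). -/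
theorem not_red_red_of_F_F (hFE : ∀ u v, F u v → E u v) (hpart : Bipartition E Er Eb)
    (hac : ACFree E F Er Eb) (hFb : ∀ u v, F u v → Committed E u v → Eb u v)
    {u1 u2 : U} {v1 v2 : V} (hr1 : Er u1 v1) (hr2 : Er u2 v2) (hf12 : F u1 v2)
    (hf21 : F u2 v1) : False := by
  obtain ⟨hA1r, hA1b, hC⟩ := hac
  obtain ⟨u', v', hconf1⟩ := (hpart.1 u1 v1).2 (Or.inl hr1)
  obtain ⟨u'', v'', hconf2⟩ := (hpart.1 u2 v2).2 (Or.inl hr2)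
  have hconf : Confl E u' v2 u'' v1 :=
    ⟨adj_of_confl_red_of_F hFE hpart hA1r hA1b hFb hr1 hconf1 hf12,
      adj_of_confl_red_of_F hFE hpart hA1r hA1b hFb hr2 hconf2 hf21,
      hconf1.2.2.2, hconf2.2.2.2⟩
  exact hA1b.not_confl_s10
    (blue_of_committed_of_F hpart hC hconf.committed_s10 hr1 hconf1.2.2.2 hf12)
    (blue_of_committed_of_F hpart hC hconf.symm_s10.committed_s10 hr2 hconf2.2.2.2 hf21) hconf

end RedBlue

/-- Given an (A, B, C)-free bipartition of the committed edges, no two red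
edges are in conflict in `G - F`. -/
theorem stmt10 {U V : Type*} (E F Er Eb : U → V → Prop) (hFE : ∀ u v, F u v → E u v)
    (hpart : Bipartition E Er Eb) (habc : ABCFree E F Er Eb)
    (hFb : ∀ u v, F u v → Committed E u v → Eb u v) :
    ¬ ∃ (u1 u2 : U) (v1 v2 : V), Er u1 v1 ∧ Er u2 v2 ∧
      (¬E u1 v2 ∨ F u1 v2) ∧ (¬E u2 v1 ∨ F u2 v1) := by
  rintro ⟨u1, u2, v1, v2, hr1, hr2, h12, h21⟩
  have hac : ACFree E F Er Eb := habc.1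
  rcases h12 with hn12 | hf12 <;> rcases h21 with hn21 | hf21
  · exact hac.1 ⟨u1, u2, v1, v2, hr1, hr2, hn12, hn21⟩
  · exact hac.2.2 ⟨u1, u2, v1, v2, hr1, hr2, hn12, hf21⟩
  · exact hac.2.2 ⟨u2, u1, v2, v1, hr2, hr1, hn21, hf12⟩
  · exact not_red_red_of_F_F hFE hpart hac hFb hr1 hr2 hf12 hf21
end

section
/- Let (E_r, E_b) be an (A, C)-free bipartition of the committed edges E_c of a bipartite graph G = (U, V, E) with F ∩ E_c ⊆ E_b, and let uv ∈ E̅ be a non-edge of G. Define H_r = {u'v' ∈ E_r : uv', u'v ∈ E_b}, H_b = {u'v' ∈ E_b : uv', u'v ∈ E_r}, and H = H_r ∪ H_b. Then F ∩ H = ∅. -/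
theorem Bipartition.not_red_of_fixed {U V : Type*} {E F Er Eb : U → V → Prop}
    (hpart : Bipartition E Er Eb) (hFb : ∀ u v, F u v → Committed E u v → Eb u v)
    {u : U} {v : V} (hF : F u v) : ¬Er u v := fun hr =>
  hpart.2 u v ⟨hr, hFb u v hF ((hpart.1 u v).mpr (Or.inl hr))⟩

theorem stmt14_general {U V : Type*} (E F Er Eb : U → V → Prop)
    (hpart : Bipartition E Er Eb) (hac : ACFree E F Er Eb)
    (hFb : ∀ u v, F u v → Committed E u v → Eb u v)
    (u : U) (v : V) (huv : ¬E u v) :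
    ∀ (u' : U) (v' : V),
      ((Er u' v' ∧ Eb u v' ∧ Eb u' v) ∨ (Eb u' v' ∧ Er u v' ∧ Er u' v)) →
      ¬F u' v' := by
  rintro u' v' (⟨hr, -, -⟩ | ⟨-, hr_uv', hr_u'v⟩) hF
  · exact hpart.not_red_of_fixed hFb hF hr
  · -- `uv'`, `u'v` ∈ Er with `uv ∉ E` and `u'v' ∈ F` is exactly configuration (C).
    exact hac.2.2 ⟨u, u', v', v, hr_uv', hr_u'v, huv, hF⟩

/-- For a non-edge `uv`, the swap set `H = H_r ∪ H_b` contains no edge of `F`. -/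
theorem stmt14 {U V : Type*} (E F Er Eb : U → V → Prop) (hFE : ∀ u v, F u v → E u v)
    (hpart : Bipartition E Er Eb) (hac : ACFree E F Er Eb)
    (hFb : ∀ u v, F u v → Committed E u v → Eb u v)
    (u : U) (v : V) (huv : ¬E u v) :
    ∀ (u' : U) (v' : V),
      ((Er u' v' ∧ Eb u v' ∧ Eb u' v) ∨ (Eb u' v' ∧ Er u v' ∧ Er u' v)) →
      ¬F u' v' :=
  stmt14_general E F Er Eb hpart hac hFb u v huv
end

section
/- Let (E_r, E_b) be an (A, C)-free bipartition of the committed edges E_c of a bipartite graph G = (U, V, E), uv a non-edge of G, H_r = {u'v' ∈ E_r : uv', u'v ∈ E_b}, H_b = {u'v' ∈ E_b : uv', u'v ∈ E_r}, H = H_r ∪ H_b, and define E_r' = (E_r \ H_r) ∪ H_b and E_b' = (E_b \ H_b) ∪ H_r. Then the new bipartition (E_r', E_b') of E_c contains no configuration (A_1) with at least one edge in H: there are no u_1, u_2 ∈ U, v_1, v_2 ∈ V with u_1v_1, u_2v_2 ∈ E_r', u_1v_2, u_2v_1 ∉ E, and {u_1v_1, u_2v_2} ∩ H ≠ ∅.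 -/
/-!
An edge of `H` that is red after the swap lies in `H_b`, so it is a blue edge `u₁v₁` with
`uv₁, u₁v ∈ E_r`. A red partner `u₂v₂` in conflict with it cannot come from `H_b` (two
conflicting blue edges), so `u₂v₂ ∈ E_r`. Since `E_r` is (A1)-free, `u₂v` and `uv₂` are edges;
they are in conflict with the red edges `uv₁` and `u₁v` respectively, hence blue, which puts
`u₂v₂` into `H_r`: it was recoloured blue after all.
-/

section

variable {U V : Type*} {E Er Eb : U → V → Prop}

theorem NoA1.adj_of_not_adj (hA : NoA1 E Er) {a c : U} {b d : V}
    (hab : Er a b) (hcd : Er c d) (had : ¬E a d) : E c b :=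
  by_contra fun hcb => hA ⟨a, c, b, d, hab, hcd, had, hcb⟩

theorem Bipartition.eb_of_confl (hpart : Bipartition E Er Eb) (hA : NoA1 E Er)
    {a c : U} {b d : V} (hc : Confl E a b c d) (hcd : Er c d) : Eb a b := by
  refine ((hpart.1 a b).1 ⟨c, d, hc⟩).resolve_left fun hab => ?_
  exact hA ⟨a, c, b, d, hab, hcd, hc.2.2.1, hc.2.2.2⟩

theorem Bipartition.adj_of_er (hpart : Bipartition E Er Eb) {a : U} {b : V}
    (h : Er a b) : E a b :=
  ((hpart.1 a b).2 (Or.inl h)).choose_spec.choose_spec.1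

theorem Bipartition.eb_corners (hpart : Bipartition E Er Eb) (hA : NoA1 E Er)
    {u u₁ u₂ : U} {v v₁ v₂ : V} (huv : ¬E u v) (hu₁ : Er u₁ v) (hv₁ : Er u v₁)
    (h₂ : Er u₂ v₂) (h₁₂ : ¬E u₁ v₂) (h₂₁ : ¬E u₂ v₁) : Eb u v₂ ∧ Eb u₂ v := by
  have huv₂ : E u v₂ := hA.adj_of_not_adj h₂ hv₁ h₂₁
  have hu₂v : E u₂ v := hA.adj_of_not_adj hu₁ h₂ h₁₂
  exact ⟨hpart.eb_of_confl hA ⟨huv₂, hpart.adj_of_er hu₁, huv, h₁₂⟩ hu₁,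
    hpart.eb_of_confl hA ⟨hu₂v, hpart.adj_of_er hv₁, h₂₁, huv⟩ hv₁⟩

end

theorem stmt15_general {U V : Type*} (E F Er Eb : U → V → Prop)
    (hpart : Bipartition E Er Eb) (hac : ACFree E F Er Eb)
    (u : U) (v : V) (huv : ¬E u v)
    (Hr Hb H Er' : U → V → Prop)
    (hHr : ∀ a b, Hr a b ↔ Er a b ∧ Eb u b ∧ Eb a v)
    (hHb : ∀ a b, Hb a b ↔ Eb a b ∧ Er u b ∧ Er a v)
    (hH : ∀ a b, H a b ↔ Hr a b ∨ Hb a b)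
    (hEr' : ∀ a b, Er' a b ↔ (Er a b ∧ ¬Hr a b) ∨ Hb a b) :
    ¬ ∃ (u1 u2 : U) (v1 v2 : V), Er' u1 v1 ∧ Er' u2 v2 ∧ ¬E u1 v2 ∧ ¬E u2 v1 ∧
      (H u1 v1 ∨ H u2 v2) := by
  obtain ⟨hAr, hAb, -⟩ := hac
  have hb_of_h : ∀ a b, Er' a b → H a b → Hb a b := fun a b h' h => by
    rw [hEr'] at h'; rw [hH] at h; tauto
  have no_conflict : ∀ u₁ u₂ v₁ v₂, Hb u₁ v₁ → Er' u₂ v₂ → ¬E u₁ v₂ → ¬E u₂ v₁ → False := by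
    intro u₁ u₂ v₁ v₂ hb₁ h₂ h₁₂ h₂₁
    obtain ⟨hb₁, hv₁, hu₁⟩ := (hHb u₁ v₁).1 hb₁
    rcases (hEr' u₂ v₂).1 h₂ with ⟨hr₂, hnr₂⟩ | hb₂
    · obtain ⟨huv₂, hu₂v⟩ := hpart.eb_corners hAr huv hu₁ hv₁ hr₂ h₁₂ h₂₁
      exact hnr₂ ((hHr u₂ v₂).2 ⟨hr₂, huv₂, hu₂v⟩)
    · exact hAb ⟨u₁, u₂, v₁, v₂, hb₁, ((hHb u₂ v₂).1 hb₂).1, h₁₂, h₂₁⟩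
  rintro ⟨u₁, u₂, v₁, v₂, h₁, h₂, h₁₂, h₂₁, hH₁ | hH₂⟩
  · exact no_conflict u₁ u₂ v₁ v₂ (hb_of_h _ _ h₁ hH₁) h₂ h₁₂ h₂₁
  · exact no_conflict u₂ u₁ v₂ v₁ (hb_of_h _ _ h₂ hH₂) h₁ h₂₁ h₁₂

/-- After swapping along a non-edge `uv`, the new bipartition contains no
configuration (A1) with at least one edge in `H`. -/
theorem stmt15 {U V : Type*} (E F Er Eb : U → V → Prop) (hFE : ∀ u v, F u v → E u v)
    (hpart : Bipartition E Er Eb) (hac : ACFree E F Er Eb)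
    (hFb : ∀ u v, F u v → Committed E u v → Eb u v)
    (u : U) (v : V) (huv : ¬E u v)
    (Hr Hb H Er' : U → V → Prop)
    (hHr : ∀ a b, Hr a b ↔ Er a b ∧ Eb u b ∧ Eb a v)
    (hHb : ∀ a b, Hb a b ↔ Eb a b ∧ Er u b ∧ Er a v)
    (hH : ∀ a b, H a b ↔ Hr a b ∨ Hb a b)
    (hEr' : ∀ a b, Er' a b ↔ (Er a b ∧ ¬Hr a b) ∨ Hb a b) :
    ¬ ∃ (u1 u2 : U) (v1 v2 : V), Er' u1 v1 ∧ Er' u2 v2 ∧ ¬E u1 v2 ∧ ¬E u2 v1 ∧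
      (H u1 v1 ∨ H u2 v2) :=
  stmt15_general E F Er Eb hpart hac u v huv Hr Hb H Er' hHr hHb hH hEr'
end

section
/- Given a bipartite graph G = (U, V, E), F ⊆ E, and the 2CNF formula φ with a variable x_e for each committed edge e ∈ E_c, clause (x_e) for each e ∈ F ∩ E_c, clauses (x_e ∨ x_{e'}) and (¬x_e ∨ ¬x_{e'}) for each pair of conflicting committed edges e, e', and clause (x_e ∨ x_{e'}) whenever edges e = u_1v_1, e' = u_2v_2 ∈ E_c satisfy u_1v_2 ∉ E and u_2v_1 ∈ F: a truth assignment τ satisfies φ if and only if the bipartition of E_c defined by E_r = {e : τ(x_e) = 0}, E_b = {e : τ(x_e) = 1} is (A, C)-free and satisfies F ∩ E_c ⊆ E_b. -/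
/-! Reading `τ u v = false` as red and `τ u v = true` as blue, each family of clauses of `φ` is
the negation of one forbidden configuration: `x_e ∨ x_e'` on conflicting edges excludes (A₁),
`¬x_e ∨ ¬x_e'` excludes (A₂), the clauses from `u₁v₂ ∉ E, u₂v₁ ∈ F` exclude (C), and the unit
clauses say `F ∩ E_c ⊆ E_b`. -/

section ColorClasses

variable {U V : Type*}

theorem Committed.edge_s16 {E : U → V → Prop} {u : U} {v : V} (h : Committed E u v) : E u v :=
  let ⟨_, _, he, _⟩ := h; he

theorem noA1_colorClass_iff {E S : U → V → Prop} (hSE : ∀ u v, S u v → E u v)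
    (τ : U → V → Bool) (b : Bool) :
    NoA1 E (fun u v => S u v ∧ τ u v = b) ↔
      ∀ u1 v1 u2 v2, S u1 v1 → S u2 v2 → Confl E u1 v1 u2 v2 →
        ¬(τ u1 v1 = b ∧ τ u2 v2 = b) := by
  refine ⟨fun h u1 v1 u2 v2 hS1 hS2 ⟨_, _, hn12, hn21⟩ ⟨hb1, hb2⟩ =>
    h ⟨u1, u2, v1, v2, ⟨hS1, hb1⟩, ⟨hS2, hb2⟩, hn12, hn21⟩, ?_⟩
  rintro h ⟨u1, u2, v1, v2, ⟨hS1, hb1⟩, ⟨hS2, hb2⟩, hn12, hn21⟩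
  exact h u1 v1 u2 v2 hS1 hS2 ⟨hSE _ _ hS1, hSE _ _ hS2, hn12, hn21⟩ ⟨hb1, hb2⟩

theorem noC_colorClass_iff {E F S : U → V → Prop} (τ : U → V → Bool) (b : Bool) :
    NoC E F (fun u v => S u v ∧ τ u v = b) ↔
      ∀ u1 v1 u2 v2, S u1 v1 → S u2 v2 → ¬E u1 v2 → F u2 v1 →
        ¬(τ u1 v1 = b ∧ τ u2 v2 = b) := by
  refine ⟨fun h u1 v1 u2 v2 hS1 hS2 hn hF ⟨hb1, hb2⟩ =>
    h ⟨u1, u2, v1, v2, ⟨hS1, hb1⟩, ⟨hS2, hb2⟩, hn, hF⟩, ?_⟩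
  rintro h ⟨u1, u2, v1, v2, ⟨hS1, hb1⟩, ⟨hS2, hb2⟩, hn, hF⟩
  exact h u1 v1 u2 v2 hS1 hS2 hn hF ⟨hb1, hb2⟩

end ColorClasses

theorem stmt16_general {U V : Type*} (E F : U → V → Prop)
    (τ : U → V → Bool) :
    ((∀ u v, F u v → Committed E u v → τ u v = true) ∧
     (∀ (u1 : U) (v1 : V) (u2 : U) (v2 : V),
        Committed E u1 v1 → Committed E u2 v2 → Confl E u1 v1 u2 v2 →
        (τ u1 v1 = true ∨ τ u2 v2 = true) ∧ ¬(τ u1 v1 = true ∧ τ u2 v2 = true)) ∧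
     (∀ (u1 : U) (v1 : V) (u2 : U) (v2 : V),
        Committed E u1 v1 → Committed E u2 v2 → ¬E u1 v2 → F u2 v1 →
        (τ u1 v1 = true ∨ τ u2 v2 = true)))
    ↔ (ACFree E F (fun u v => Committed E u v ∧ τ u v = false)
                  (fun u v => Committed E u v ∧ τ u v = true) ∧
       ∀ u v, F u v → Committed E u v → τ u v = true) := by
  have hCE : ∀ u v, Committed E u v → E u v := fun _ _ h => h.edge_s16
  rw [ACFree, noA1_colorClass_iff hCE, noA1_colorClass_iff hCE, noC_colorClass_iff]
  simp only [← Bool.not_eq_false, ← not_and_or, imp_and, forall_and]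
  tauto

/-- A truth assignment satisfies the 2CNF formula `φ` iff the corresponding
bipartition of the committed edges is (A, C)-free with all committed
`F`-edges blue. -/
theorem stmt16 {U V : Type*} (E F : U → V → Prop) (hFE : ∀ u v, F u v → E u v)
    (τ : U → V → Bool) :
    ((∀ u v, F u v → Committed E u v → τ u v = true) ∧
     (∀ (u1 : U) (v1 : V) (u2 : U) (v2 : V),
        Committed E u1 v1 → Committed E u2 v2 → Confl E u1 v1 u2 v2 →
        (τ u1 v1 = true ∨ τ u2 v2 = true) ∧ ¬(τ u1 v1 = true ∧ τ u2 v2 = true)) ∧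
     (∀ (u1 : U) (v1 : V) (u2 : U) (v2 : V),
        Committed E u1 v1 → Committed E u2 v2 → ¬E u1 v2 → F u2 v1 →
        (τ u1 v1 = true ∨ τ u2 v2 = true)))
    ↔ (ACFree E F (fun u v => Committed E u v ∧ τ u v = false)
                  (fun u v => Committed E u v ∧ τ u v = true) ∧
       ∀ u v, F u v → Committed E u v → τ u v = true) :=
  stmt16_general E F τ
end

section
/- Let G = (U, V, E) be a bipartite graph. If G has a 2-chain subgraph cover, then the conflict graph G* of G is bipartite (2-colorable), where G* has vertex set E and two edges of G are adjacent in G* if they are in conflict in G. -/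
/-! Color an edge by whether it lies in the first chain subgraph. Two conflicting edges that both
lie in a subgraph `F` form an induced 2K2 of `F`, so each chain subgraph contains at most one edge
of a conflicting pair; as the two subgraphs cover `E`, the edges get different colors. -/

theorem NoInduced2K2.not_and_of_confl {U V : Type*} {E F : U → V → Prop}
    (hF : NoInduced2K2 F) (hFE : ∀ u v, F u v → E u v) {u1 : U} {v1 : V} {u2 : U} {v2 : V}
    (hc : Confl E u1 v1 u2 v2) : ¬(F u1 v1 ∧ F u2 v2) := fun ⟨h1, h2⟩ =>
  hF ⟨u1, u2, v1, v2, h1, h2, fun h => hc.2.2.1 (hFE _ _ h), fun h => hc.2.2.2 (hFE _ _ h)⟩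

/-- If a bipartite graph has a 2-chain subgraph cover, then its conflict graph
is bipartite (2-colorable). -/
theorem stmt17 {U V : Type*} (E : U → V → Prop)
    (h : ∃ E1 E2 : U → V → Prop, ChainCover E E1 E2) :
    ∃ c : U → V → Bool, ∀ (u1 : U) (v1 : V) (u2 : U) (v2 : V),
      Confl E u1 v1 u2 v2 → c u1 v1 ≠ c u2 v2 := by
  classical
  obtain ⟨E1, E2, hE1, hE2, hcov, hk1, hk2⟩ := h
  refine ⟨fun u v => decide (E1 u v), fun u1 v1 u2 v2 hc hcol => ?_⟩
  have hiff : E1 u1 v1 ↔ E1 u2 v2 := by simpa only [decide_eq_decide] using hcol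
  by_cases h11 : E1 u1 v1
  · exact hk1.not_and_of_confl hE1 hc ⟨h11, hiff.mp h11⟩
  · have h21 := ((hcov u1 v1).mp hc.1).resolve_left h11
    have h22 := ((hcov u2 v2).mp hc.2.1).resolve_left (mt hiff.mpr h11)
    exact hk2.not_and_of_confl hE2 hc ⟨h21, h22⟩
end
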